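/- arXiv:2002.01843 — 2 statements merged into one kernel-verified Lean document; each statement's English description precedes it below -/
import Mathlib

section
/- Let G = (V,E) be a finite simple graph on N vertices with at least one edge. Then there exist independent sets A_1,…,A_N ⊆ V that are linearly independent over 𝔽₂ (no nonempty subfamily has empty symmetric difference), a vertex T with s^{A_j}_T ∈ {−1,+1} for every j, and positive integers m_1,…,m_N with Σ_{j : s^{A_j}_T = +1} m_j = Σ_{j : s^{A_j}_T = −1} m_j =: W, such that the weighted Bell expression B = Σ_{j=1}^N m_j · (A_T + s^{A_j}_T B_T) · ∏_{i≠T} O_i(s^{A_j}_i) satisfies: (i) the maximum of its value over all deterministic local hidden-variable assignments equals β_C = 2W; and (ii) with the ideal observables (A_T = (X_T+Z_T)/√2, B_T = (X_T−Z_T)/√2, and A_i = X_i, B_i = Z_i for i ≠ T), the graph state gives ⟨ψ_G | B | ψ_G⟩ = √2 · β_C. Hence the quantum-to-classical ratio √2 is achieved using only the 2N correlation functions arising from the N stabilizer sequences. -/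
/-!
Let `T` be an endpoint of an edge and, for each vertex `v`, let `A_v = {v}` if `v ~ T` and
`A_v = {v, T}` otherwise. These independent sets are 𝔽₂-independent since `v ∈ A_v ⊆ {v, T}`,
and `s^{A_v}_T` is `-1` or `+1` according as `v ~ T` or not, so both signs occur at `T`;
weighting each `+1` sequence by the number of `-1` sequences and vice versa balances them.

Classically, `a_T + s b_T = a_T (1 + s a_T b_T)`, so the `j`-th summand is at most
`m_j (1 + s_j a_T b_T)`; balancing makes `∑ m_j s_j = 0`, leaving `∑ m_j = 2W`.

Quantumly, `A_T + s B_T` is `√2 X_T` or `√2 Z_T`, so each correlator is `√2` times the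
stabilizer `∏_{v ∈ A} X_v ∏_{s_v = -1} Z_v` of `ψ_G`. It fixes `ψ_G` because flipping the bits
of an independent set `A` changes the parity of `q(x)` by `∑ x_v` over the vertices `v` with
`|n_v ∩ A|` odd.
-/

open scoped InnerProductSpace

noncomputable section

variable {V : Type} [Fintype V] [DecidableEq V]

/-- The Hilbert space of `|V|` qubits, `ℂ^({0,1}^V)`. -/
abbrev QState (V : Type) [Fintype V] [DecidableEq V] :=
  EuclideanSpace ℂ (V → Bool)

/-- The Pauli `Z` operator on qubit `v`. -/
def pauliZ (v : V) : QState V →ₗ[ℂ] QState V where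
  toFun ψ := WithLp.toLp 2 (fun x => (if x v then -1 else 1) * ψ x)
  map_add' ψ φ := by
    ext x
    simp [mul_add]
  map_smul' c ψ := by
    ext x
    simp [mul_comm, mul_left_comm]

/-- The Pauli `X` operator on qubit `v`. -/
def pauliX (v : V) : QState V →ₗ[ℂ] QState V where
  toFun ψ := WithLp.toLp 2 (fun x => ψ (Function.update x v (!x v)))
  map_add' ψ φ := by ext x; simp
  map_smul' c ψ := by ext x; simp

/-- The number `q(x)` of edges of `G` whose two endpoints both carry the
value `1` in the configuration `x`. -/
def edgeCount (G : SimpleGraph V) [DecidableRel G.Adj] (x : V → Bool) : ℕ :=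
  (G.edgeFinset.filter fun e =>
    Sym2.lift ⟨fun a b => x a && x b, fun _ _ => Bool.and_comm _ _⟩ e = true).card

/-- The graph state `ψ_G`, with amplitudes `(−1)^{q(x)} / 2^{N/2}`. -/
def graphState (G : SimpleGraph V) [DecidableRel G.Adj] : QState V :=
  WithLp.toLp 2 (fun x => (-1 : ℂ) ^ edgeCount G x / ((Real.sqrt 2 : ℝ) : ℂ) ^ Fintype.card V)

/-- The stabilizer sign sequence `s^A` of an independent set `A`. -/
def signSeq (G : SimpleGraph V) [DecidableRel G.Adj] (A : Finset V) (v : V) : ℤ :=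
  if v ∈ A then 1 else if Odd (G.neighborFinset v ∩ A).card then -1 else 0

/-- Observable associated to the symbol `k` (quantum side). -/
def obsV (Ao Bo : V → QState V →ₗ[ℂ] QState V) (i : V) (k : ℤ) :
    QState V →ₗ[ℂ] QState V :=
  if k = 1 then Ao i else if k = -1 then Bo i else 1

/-- Value associated to the symbol `k` (classical side):
`p_i(0) = 1`, `p_i(+1) = a_i`, `p_i(-1) = b_i`. -/
def clObsV (a b : V → ℤ) (i : V) (k : ℤ) : ℤ :=
  if k = 1 then a i else if k = -1 then b i else 1

/-- The ideal observable `A_i`: `(X_i + Z_i)/√2` for `i ∈ AC`, `X_i` otherwise. -/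
def idealA (AC : Finset V) (i : V) : QState V →ₗ[ℂ] QState V :=
  if i ∈ AC then ((Real.sqrt 2 : ℝ) : ℂ)⁻¹ • (pauliX i + pauliZ i) else pauliX i

/-- The ideal observable `B_i`: `(X_i − Z_i)/√2` for `i ∈ AC`, `Z_i` otherwise. -/
def idealB (AC : Finset V) (i : V) : QState V →ₗ[ℂ] QState V :=
  if i ∈ AC then ((Real.sqrt 2 : ℝ) : ℂ)⁻¹ • (pauliX i - pauliZ i) else pauliZ i

section BitFlips

variable {α : Type*}

def zSign (Z : Finset α) (x : α → Bool) : ℂ := ∏ v ∈ Z, if x v then -1 else 1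

lemma zSign_mul_self (Z : Finset α) (x : α → Bool) : zSign Z x * zSign Z x = 1 := by
  rw [zSign, ← Finset.prod_mul_distrib]
  exact Finset.prod_eq_one fun v _ => by split_ifs <;> norm_num

variable [DecidableEq α]

def flipOn (S : Finset α) (x : α → Bool) : α → Bool := fun v => if v ∈ S then !x v else x v

@[simp]
lemma flipOn_empty (x : α → Bool) : flipOn ∅ x = x := by
  funext v; simp [flipOn]

lemma flipOn_singleton (v : α) (x : α → Bool) :
    flipOn {v} x = Function.update x v (!x v) := by
  funext w
  by_cases hw : w = v
  · subst hw; simp [flipOn]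
  · simp [flipOn, hw]

lemma flipOn_flipOn {S₁ S₂ : Finset α} (h : Disjoint S₁ S₂) (x : α → Bool) :
    flipOn S₂ (flipOn S₁ x) = flipOn (S₁ ∪ S₂) x := by
  funext v
  by_cases h₁ : v ∈ S₁
  · simp [flipOn, h₁, Finset.disjoint_left.mp h h₁]
  · by_cases h₂ : v ∈ S₂ <;> simp [flipOn, h₁, h₂]

lemma zSign_flipOn_of_disjoint {S Z : Finset α} (h : Disjoint S Z) (x : α → Bool) :
    zSign Z (flipOn S x) = zSign Z x :=
  Finset.prod_congr rfl fun v hv => by simp [flipOn, Finset.disjoint_right.mp h hv]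

end BitFlips

/-- The Pauli string `∏_{v ∈ Z} Z_v ∏_{v ∈ X} X_v`. -/
def pauliString (X Z : Finset V) : QState V →ₗ[ℂ] QState V where
  toFun ψ := WithLp.toLp 2 fun x => zSign Z x * ψ (flipOn X x)
  map_add' ψ φ := by ext x; simp [mul_add]
  map_smul' c ψ := by ext x; simp [mul_left_comm]

@[simp]
lemma pauliString_apply (X Z : Finset V) (ψ : QState V) (x : V → Bool) :
    pauliString X Z ψ x = zSign Z x * ψ (flipOn X x) := rfl

lemma pauliString_mul {X₁ Z₁ X₂ Z₂ : Finset V} (hX : Disjoint X₁ X₂) (hZ : Disjoint Z₁ Z₂)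
    (hXZ : Disjoint X₁ Z₂) :
    pauliString X₁ Z₁ * pauliString X₂ Z₂ = pauliString (X₁ ∪ X₂) (Z₁ ∪ Z₂) := by
  ext ψ x
  rw [Module.End.mul_apply, pauliString_apply, pauliString_apply, pauliString_apply,
    zSign_flipOn_of_disjoint hXZ, flipOn_flipOn hX, zSign, zSign, zSign, Finset.prod_union hZ]
  ring

lemma pauliX_eq_pauliString (v : V) : pauliX v = pauliString {v} ∅ := by
  ext ψ x
  simp [zSign, flipOn_singleton, pauliX]

lemma pauliZ_eq_pauliString (v : V) : pauliZ v = pauliString ∅ {v} := by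
  ext ψ x
  simp [zSign, pauliZ]

lemma pauliString_empty : pauliString (∅ : Finset V) ∅ = 1 := by
  ext ψ x
  simp [zSign]

lemma obsV_ideal_eq_pauliString {T i : V} (hi : i ≠ T) (σ : V → ℤ) :
    obsV (idealA {T}) (idealB {T}) i (σ i) =
      pauliString (({i} : Finset V).filter (σ · = 1))
        (({i} : Finset V).filter (σ · = -1)) := by
  have hiT : i ∉ ({T} : Finset V) := Finset.notMem_singleton.mpr hi
  by_cases h₁ : σ i = 1
  · simp [obsV, idealA, hiT, h₁, Finset.filter_singleton, pauliX_eq_pauliString]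
  by_cases h₂ : σ i = -1
  · simp [obsV, idealB, hiT, h₂, Finset.filter_singleton, pauliZ_eq_pauliString]
  · simp [obsV, h₁, h₂, Finset.filter_singleton, pauliString_empty]

lemma list_prod_obsV_ideal (T : V) (σ : V → ℤ) {l : List V} (hl : l.Nodup) (hT : T ∉ l) :
    (l.map fun i => obsV (idealA {T}) (idealB {T}) i (σ i)).prod =
      pauliString (l.toFinset.filter (σ · = 1)) (l.toFinset.filter (σ · = -1)) := by
  induction l with
  | nil => simp [pauliString_empty]
  | cons i l ih =>
    obtain ⟨hil, hl⟩ := List.nodup_cons.mp hl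
    have hiT : i ≠ T := fun h => hT (h ▸ List.mem_cons_self)
    have hdisj : Disjoint ({i} : Finset V) l.toFinset := by simpa using hil
    rw [List.map_cons, List.prod_cons, ih hl (fun h => hT (List.mem_cons_of_mem i h)),
      obsV_ideal_eq_pauliString hiT, pauliString_mul (Finset.disjoint_filter_filter hdisj)
        (Finset.disjoint_filter_filter hdisj) (Finset.disjoint_filter_filter hdisj),
      List.toFinset_cons, Finset.insert_eq, Finset.filter_union, Finset.filter_union]

lemma ofReal_sqrt_two_inv_mul_two :
    ((Real.sqrt 2 : ℝ) : ℂ)⁻¹ * 2 = ((Real.sqrt 2 : ℝ) : ℂ) := by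
  have h : ((Real.sqrt 2 : ℝ) : ℂ) * ((Real.sqrt 2 : ℝ) : ℂ) = 2 := by
    rw [← Complex.ofReal_mul, Real.mul_self_sqrt zero_le_two, Complex.ofReal_ofNat]
  have h₀ : ((Real.sqrt 2 : ℝ) : ℂ) ≠ 0 := by
    rw [Complex.ofReal_ne_zero]; positivity
  rw [inv_mul_eq_div, div_eq_iff h₀, h]

lemma idealA_add_smul_idealB_self (T : V) (σ : V → ℤ) (hT : σ T = 1 ∨ σ T = -1) :
    idealA {T} T + σ T • idealB {T} T =
      ((Real.sqrt 2 : ℝ) : ℂ) •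
        pauliString (({T} : Finset V).filter (σ · = 1))
          (({T} : Finset V).filter (σ · = -1)) := by
  rcases hT with h | h
  · have : pauliX T + pauliZ T + (pauliX T - pauliZ T) = (2 : ℂ) • pauliX T := by
      rw [two_smul]; abel
    simp only [idealA, idealB, Finset.mem_singleton, if_true, h, one_smul, ← smul_add, this,
      smul_smul, ofReal_sqrt_two_inv_mul_two, Finset.filter_singleton]
    simp [pauliX_eq_pauliString]
  · have : pauliX T + pauliZ T - (pauliX T - pauliZ T) = (2 : ℂ) • pauliZ T := by
      rw [two_smul]; abel
    simp only [idealA, idealB, Finset.mem_singleton, if_true, h, neg_smul, one_smul,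
      ← sub_eq_add_neg, ← smul_sub, this, smul_smul, ofReal_sqrt_two_inv_mul_two,
      Finset.filter_singleton]
    simp [pauliZ_eq_pauliString]

def idealCorrelator (T : V) (σ : V → ℤ) : QState V →ₗ[ℂ] QState V :=
  (idealA {T} T + σ T • idealB {T} T) *
    ((Finset.univ.erase T).toList.map fun i => obsV (idealA {T}) (idealB {T}) i (σ i)).prod

lemma idealCorrelator_eq_smul_pauliString (T : V) (σ : V → ℤ) (hT : σ T = 1 ∨ σ T = -1) :
    idealCorrelator T σ = ((Real.sqrt 2 : ℝ) : ℂ) •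
        pauliString (Finset.univ.filter (σ · = 1)) (Finset.univ.filter (σ · = -1)) := by
  rw [idealCorrelator, idealA_add_smul_idealB_self T σ hT,
    list_prod_obsV_ideal T σ (Finset.nodup_toList _) (by simp), smul_mul_assoc,
    pauliString_mul (Finset.disjoint_filter_filter (by simp))
      (Finset.disjoint_filter_filter (by simp))
      (Finset.disjoint_filter_filter (by simp)),
    Finset.toList_toFinset, ← Finset.filter_union, ← Finset.filter_union, ← Finset.insert_eq,
    Finset.insert_erase (Finset.mem_univ T)]

def edgeOccupied {α : Type*} (x : α → Bool) : Sym2 α → Bool :=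
  Sym2.lift ⟨fun a b => x a && x b, fun _ _ => Bool.and_comm _ _⟩

section GraphState

variable (G : SimpleGraph V) [DecidableRel G.Adj]

lemma prod_edgeFinset_filter_mem {M : Type*} [CommMonoid M] (v : V) (f : Sym2 V → M) :
    ∏ e ∈ G.edgeFinset with v ∈ e, f e = ∏ w ∈ G.neighborFinset v, f s(v, w) := by
  rw [← Finset.prod_image fun w _ w' _ h => Sym2.congr_right.mp h]
  congr 1
  ext e
  induction e using Sym2.ind with
  | _ a b =>
    simp only [Finset.mem_filter, SimpleGraph.mem_edgeFinset, SimpleGraph.mem_edgeSet,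
      Sym2.mem_iff, Finset.mem_image, SimpleGraph.mem_neighborFinset, Sym2.eq_iff]
    constructor
    · rintro ⟨hab, rfl | rfl⟩
      · exact ⟨b, hab, Or.inl ⟨rfl, rfl⟩⟩
      · exact ⟨a, hab.symm, Or.inr ⟨rfl, rfl⟩⟩
    · rintro ⟨w, hw, ⟨rfl, rfl⟩ | ⟨rfl, rfl⟩⟩
      · exact ⟨hw, Or.inl rfl⟩
      · exact ⟨hw.symm, Or.inr rfl⟩

lemma neg_one_pow_edgeCount_flipOn_singleton (v : V) (x : V → Bool) :
    (-1 : ℂ) ^ edgeCount G (flipOn {v} x) =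
      (-1) ^ edgeCount G x * zSign (G.neighborFinset v) x := by
  have hsign : ∀ y : V → Bool,
      (-1 : ℂ) ^ edgeCount G y = ∏ e ∈ G.edgeFinset, if edgeOccupied y e then -1 else 1 := by
    intro y
    rw [Finset.prod_ite, Finset.prod_const_one, mul_one, Finset.prod_const]
    rfl
  have hfar : ∏ e ∈ G.edgeFinset with v ∉ e,
      (if edgeOccupied (flipOn {v} x) e then (-1 : ℂ) else 1) =
        ∏ e ∈ G.edgeFinset with v ∉ e, if edgeOccupied x e then -1 else 1 := by
    refine Finset.prod_congr rfl fun e he => ?_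
    induction e using Sym2.ind with
    | _ a b =>
      obtain ⟨hav, hbv⟩ : a ≠ v ∧ b ≠ v := by
        simpa [Sym2.mem_iff, eq_comm] using (Finset.mem_filter.mp he).2
      simp [edgeOccupied, flipOn, hav, hbv]
  have hnear : ∀ w ∈ G.neighborFinset v,
      (if edgeOccupied (flipOn {v} x) s(v, w) then (-1 : ℂ) else 1) =
        (if edgeOccupied x s(v, w) then -1 else 1) * if x w then -1 else 1 := by
    intro w hw
    have hwv : w ≠ v := ((G.mem_neighborFinset v w).mp hw).ne'
    cases hx : x v <;> cases hy : x w <;> simp [edgeOccupied, flipOn, hwv, hx, hy]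
  rw [hsign, hsign,
    ← Finset.prod_filter_mul_prod_filter_not G.edgeFinset (v ∈ ·),
    ← Finset.prod_filter_mul_prod_filter_not G.edgeFinset (v ∈ ·),
    prod_edgeFinset_filter_mem, prod_edgeFinset_filter_mem,
    Finset.prod_congr rfl hnear, Finset.prod_mul_distrib, hfar, zSign]
  ring

lemma neg_one_pow_edgeCount_flipOn {A : Finset V} (hA : ∀ u ∈ A, ∀ w ∈ A, ¬ G.Adj u w)
    (x : V → Bool) :
    (-1 : ℂ) ^ edgeCount G (flipOn A x) =
      (-1) ^ edgeCount G x * ∏ a ∈ A, zSign (G.neighborFinset a) x := by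
  induction A using Finset.induction_on generalizing x with
  | empty => simp
  | insert a A ha ih =>
    have hA' : ∀ u ∈ A, ∀ w ∈ A, ¬ G.Adj u w := fun u hu w hw =>
      hA u (Finset.mem_insert_of_mem hu) w (Finset.mem_insert_of_mem hw)
    have hdisj : ∀ b ∈ A, Disjoint {a} (G.neighborFinset b) := fun b hb => by
      simpa using hA b (Finset.mem_insert_of_mem hb) a (Finset.mem_insert_self a A)
    have hflip : flipOn (insert a A) x = flipOn A (flipOn {a} x) := by
      rw [flipOn_flipOn (by simpa using ha), Finset.insert_eq]
    rw [hflip, ih hA', neg_one_pow_edgeCount_flipOn_singleton, Finset.prod_insert ha,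
      Finset.prod_congr rfl fun b hb => zSign_flipOn_of_disjoint (hdisj b hb) x]
    ring

lemma prod_zSign_neighborFinset {A : Finset V} (hA : ∀ u ∈ A, ∀ w ∈ A, ¬ G.Adj u w)
    (x : V → Bool) :
    ∏ a ∈ A, zSign (G.neighborFinset a) x =
      zSign (Finset.univ.filter (signSeq G A · = -1)) x := by
  set ε : V → ℂ := fun w => if x w then -1 else 1
  have hcount : ∀ w, (∏ a ∈ A, if G.Adj a w then ε w else 1) =
      if signSeq G A w = -1 then ε w else 1 := by
    intro w
    have hcard : A.filter (G.Adj · w) = G.neighborFinset w ∩ A := by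
      ext a; simp [G.adj_comm, and_comm]
    rw [Finset.prod_ite, Finset.prod_const_one, mul_one, Finset.prod_const, hcard, signSeq]
    by_cases hw : w ∈ A
    · have : G.neighborFinset w ∩ A = ∅ :=
        Finset.eq_empty_of_forall_notMem fun a ha => by
          simp only [Finset.mem_inter, SimpleGraph.mem_neighborFinset] at ha
          exact hA w hw a ha.2 ha.1
      simp [hw, this]
    · rcases Nat.even_or_odd (G.neighborFinset w ∩ A).card with h | h <;>
        cases hx : x w <;> simp [ε, hw, h, hx, Nat.not_odd_iff_even.mpr, h.neg_one_pow]
  simp only [zSign, SimpleGraph.neighborFinset_eq_filter, Finset.prod_filter]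
  rw [Finset.prod_comm]
  exact Finset.prod_congr rfl fun w _ => hcount w

lemma pauliString_apply_graphState {A : Finset V} (hA : ∀ u ∈ A, ∀ w ∈ A, ¬ G.Adj u w) :
    pauliString A (Finset.univ.filter (signSeq G A · = -1)) (graphState G) = graphState G := by
  ext x
  simp only [pauliString_apply, graphState, PiLp.toLp_apply]
  rw [neg_one_pow_edgeCount_flipOn G hA, prod_zSign_neighborFinset G hA]
  linear_combination ((-1 : ℂ) ^ edgeCount G x / ((Real.sqrt 2 : ℝ) : ℂ) ^ Fintype.card V) *
    zSign_mul_self (Finset.univ.filter (signSeq G A · = -1)) x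

lemma filter_signSeq_eq_one (A : Finset V) : Finset.univ.filter (signSeq G A · = 1) = A := by
  ext v
  by_cases hv : v ∈ A
  · simp [signSeq, hv]
  · by_cases ho : Odd (G.neighborFinset v ∩ A).card <;> simp [signSeq, hv, ho]

lemma idealCorrelator_apply_graphState {A : Finset V} (hA : ∀ u ∈ A, ∀ w ∈ A, ¬ G.Adj u w)
    {T : V} (hT : signSeq G A T = 1 ∨ signSeq G A T = -1) :
    idealCorrelator T (signSeq G A) (graphState G) = ((Real.sqrt 2 : ℝ) : ℂ) • graphState G := by
  rw [idealCorrelator_eq_smul_pauliString T (signSeq G A) hT, filter_signSeq_eq_one,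
    LinearMap.smul_apply, pauliString_apply_graphState G hA]

lemma norm_graphState : ‖graphState G‖ = 1 := by
  have hamp : ∀ x, ‖graphState G x‖ ^ 2 = ((2 : ℝ) ^ Fintype.card V)⁻¹ := by
    intro x
    simp [graphState, norm_pow, ← pow_mul, pow_mul', abs_of_nonneg (Real.sqrt_nonneg 2)]
  rw [EuclideanSpace.norm_eq, Real.sqrt_eq_one, Finset.sum_congr rfl fun x _ => hamp x,
    Finset.sum_const, Finset.card_univ, Fintype.card_fun, Fintype.card_bool, nsmul_eq_mul]
  push_cast
  exact mul_inv_cancel₀ (by positivity)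

end GraphState

lemma inner_sum_nsmul_apply_of_eigen {E ι : Type*} [NormedAddCommGroup E]
    [InnerProductSpace ℂ E] (s : Finset ι) (m : ι → ℕ) (O : ι → E →ₗ[ℂ] E) {ψ : E}
    (hψ : ‖ψ‖ = 1) {c : ℂ} (hO : ∀ j ∈ s, O j ψ = c • ψ) :
    ⟪ψ, (∑ j ∈ s, m j • O j) ψ⟫_ℂ = c * ∑ j ∈ s, (m j : ℂ) := by
  rw [LinearMap.sum_apply, inner_sum, Finset.mul_sum]
  refine Finset.sum_congr rfl fun j hj => ?_
  rw [LinearMap.smul_apply, hO j hj, ← Nat.cast_smul_eq_nsmul ℂ, smul_smul, inner_smul_right,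
    inner_self_eq_norm_sq_to_K, hψ]
  simp [mul_comm]

lemma bell_summand_le {a b s p : ℤ} (ha : a = 1 ∨ a = -1) (hb : b = 1 ∨ b = -1)
    (hs : s = 1 ∨ s = -1) (hp : p = 1 ∨ p = -1) : (a + s * b) * p ≤ 1 + s * (a * b) := by
  rcases ha with rfl | rfl <;> rcases hb with rfl | rfl <;> rcases hs with rfl | rfl <;>
    rcases hp with rfl | rfl <;> norm_num

lemma prod_clObsV_eq_one_or {α : Type} {a b : α → ℤ} (ha : ∀ i, a i = 1 ∨ a i = -1)
    (hb : ∀ i, b i = 1 ∨ b i = -1) (S : Finset α) (k : α → ℤ) :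
    ∏ i ∈ S, clObsV a b i (k i) = 1 ∨ ∏ i ∈ S, clObsV a b i (k i) = -1 := by
  refine Finset.prod_induction _ (fun z : ℤ => z = 1 ∨ z = -1) ?_ (Or.inl rfl) fun i _ => ?_
  · rintro _ _ (rfl | rfl) (rfl | rfl) <;> norm_num
  · unfold clObsV
    split_ifs
    exacts [ha i, hb i, Or.inl rfl]

section BalancedWeights

variable {ι : Type*} [Fintype ι]

lemma exists_balanced_weights (σ : ι → ℤ) (h₁ : ∃ j, σ j = 1) (h₂ : ∃ j, σ j = -1) :
    ∃ (m : ι → ℕ) (W : ℕ), (∀ j, 0 < m j) ∧ 0 < W ∧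
      ∑ j ∈ Finset.univ.filter (σ · = 1), m j = W ∧
      ∑ j ∈ Finset.univ.filter (σ · = -1), m j = W := by
  set P := Finset.univ.filter (σ · = 1)
  set M := Finset.univ.filter (σ · = -1)
  have hP : 0 < P.card := Finset.card_pos.mpr (h₁.imp fun j hj => by simpa [P] using hj)
  have hM : 0 < M.card := Finset.card_pos.mpr (h₂.imp fun j hj => by simpa [M] using hj)
  refine ⟨fun j => if σ j = 1 then M.card else P.card, P.card * M.card,
    fun j => by dsimp only; split_ifs <;> assumption, Nat.mul_pos hP hM, ?_, ?_⟩
  · rw [Finset.sum_congr rfl fun j hj => if_pos (Finset.mem_filter.mp hj).2, Finset.sum_const,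
      smul_eq_mul]
  · rw [Finset.sum_congr rfl fun j hj => if_neg (by simp [(Finset.mem_filter.mp hj).2]),
      Finset.sum_const, smul_eq_mul, mul_comm]

variable {σ : ι → ℤ} {m : ι → ℕ} {W : ℕ}

lemma sum_eq_sum_filter_add_sum_filter {M : Type*} [AddCommMonoid M]
    (hσ : ∀ j, σ j = 1 ∨ σ j = -1) (f : ι → M) :
    ∑ j, f j =
      ∑ j ∈ Finset.univ.filter (σ · = 1), f j + ∑ j ∈ Finset.univ.filter (σ · = -1), f j := by
  rw [← Finset.sum_filter_add_sum_filter_not Finset.univ (σ · = 1)]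
  congr 2
  ext j
  rcases hσ j with h | h <;> simp [h]

variable (hσ : ∀ j, σ j = 1 ∨ σ j = -1)
  (hP : ∑ j ∈ Finset.univ.filter (σ · = 1), m j = W)
  (hM : ∑ j ∈ Finset.univ.filter (σ · = -1), m j = W)
include hσ hP hM

lemma sum_balanced_weights : ∑ j, m j = 2 * W := by
  rw [sum_eq_sum_filter_add_sum_filter hσ, hP, hM, two_mul]

lemma sum_balanced_weights_mul_sign : ∑ j, (m j : ℤ) * σ j = 0 := by
  have hplus : ∑ j ∈ Finset.univ.filter (σ · = 1), (m j : ℤ) * σ j = W := by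
    rw [← hP, Nat.cast_sum]
    exact Finset.sum_congr rfl fun j hj => by rw [(Finset.mem_filter.mp hj).2, mul_one]
  have hminus : ∑ j ∈ Finset.univ.filter (σ · = -1), (m j : ℤ) * σ j = -W := by
    rw [← hM, Nat.cast_sum, ← Finset.sum_neg_distrib]
    exact Finset.sum_congr rfl fun j hj => by rw [(Finset.mem_filter.mp hj).2, mul_neg_one]
  rw [sum_eq_sum_filter_add_sum_filter hσ, hplus, hminus, add_neg_cancel]

lemma bell_sum_le {p : ι → ℤ} (hp : ∀ j, p j = 1 ∨ p j = -1) {a b : ℤ}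
    (ha : a = 1 ∨ a = -1) (hb : b = 1 ∨ b = -1) :
    ∑ j, (m j : ℤ) * ((a + σ j * b) * p j) ≤ 2 * W :=
  calc ∑ j, (m j : ℤ) * ((a + σ j * b) * p j)
      ≤ ∑ j, (m j : ℤ) * (1 + σ j * (a * b)) :=
        Finset.sum_le_sum fun j _ =>
          mul_le_mul_of_nonneg_left (bell_summand_le ha hb (hσ j) (hp j)) (Nat.cast_nonneg _)
    _ = ((∑ j, m j : ℕ) : ℤ) + a * b * ∑ j, (m j : ℤ) * σ j := by
        rw [Nat.cast_sum, Finset.mul_sum, ← Finset.sum_add_distrib]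
        exact Finset.sum_congr rfl fun j _ => by ring
    _ = 2 * W := by
        rw [sum_balanced_weights hσ hP hM, sum_balanced_weights_mul_sign hσ hP hM]
        push_cast
        ring

lemma bell_sum_eq_of_one : ∑ j, (m j : ℤ) * ((1 + σ j * 1) * 1) = 2 * W := by
  simp only [mul_one, mul_add, Finset.sum_add_distrib, sum_balanced_weights_mul_sign hσ hP hM,
    add_zero]
  exact_mod_cast sum_balanced_weights hσ hP hM

end BalancedWeights

lemma exists_sum_ite_mem_ne_zero {ι α : Type*} [DecidableEq α] {A : ι → Finset α} {f : ι → α}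
    (hf : Function.Injective f) {T : α} (hmem : ∀ i, f i ∈ A i) (hsub : ∀ i, A i ⊆ {f i, T})
    {S : Finset ι} (hS : S.Nonempty) :
    ∃ v, (∑ j ∈ S, if v ∈ A j then (1 : ZMod 2) else 0) ≠ 0 := by
  obtain ⟨j₀, hj₀, hpick⟩ : ∃ j₀ ∈ S, ∀ j ∈ S, j ≠ j₀ → f j₀ ≠ T := by
    by_cases h : ∃ j ∈ S, f j ≠ T
    · obtain ⟨j, hj, hjT⟩ := h
      exact ⟨j, hj, fun _ _ _ => hjT⟩
    · push Not at h
      obtain ⟨j₀, hj₀⟩ := hS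
      exact ⟨j₀, hj₀, fun j hj hne => absurd (hf ((h j hj).trans (h j₀ hj₀).symm)) hne⟩
  refine ⟨f j₀, ?_⟩
  rw [Finset.sum_eq_single j₀ ?_ fun h => absurd hj₀ h, if_pos (hmem j₀)]
  · exact one_ne_zero
  · intro j hj hne
    rw [if_neg]
    intro hj₀j
    rcases Finset.mem_insert.mp (hsub j hj₀j) with h | h
    · exact hne (hf h).symm
    · exact hpick j hj hne (Finset.mem_singleton.mp h)

section AnchoredSet

variable {α : Type*} [DecidableEq α] (G : SimpleGraph α) [DecidableRel G.Adj] (T v : α)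

def anchoredSet : Finset α := if G.Adj T v then {v} else {v, T}

lemma anchoredSet_independent :
    ∀ u ∈ anchoredSet G T v, ∀ w ∈ anchoredSet G T v, ¬ G.Adj u w := by
  unfold anchoredSet
  split_ifs with h
  · simp
  · simp only [Finset.mem_insert, Finset.mem_singleton]
    rintro u (rfl | rfl) w (rfl | rfl)
    exacts [G.irrefl, fun h' => h h'.symm, h, G.irrefl]

lemma mem_anchoredSet_self : v ∈ anchoredSet G T v := by
  unfold anchoredSet; split_ifs <;> simp

lemma anchoredSet_subset : anchoredSet G T v ⊆ {v, T} := by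
  unfold anchoredSet; split_ifs <;> simp

end AnchoredSet

lemma signSeq_anchoredSet (G : SimpleGraph V) [DecidableRel G.Adj] (T v : V) :
    signSeq G (anchoredSet G T v) T = if G.Adj T v then -1 else 1 := by
  unfold anchoredSet
  split_ifs with h
  · have hv : G.neighborFinset T ∩ {v} = {v} := by simpa using h
    simp [signSeq, h.ne, hv]
  · simp [signSeq]

theorem exists_constant_ratio_bell_inequality
    (G : SimpleGraph V) [DecidableRel G.Adj]
    (hedge : ∃ u w : V, G.Adj u w) :
    ∃ (A : Fin (Fintype.card V) → Finset V) (T : V)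
      (m : Fin (Fintype.card V) → ℕ) (W : ℕ),
      -- the A_j are independent sets
      (∀ j, ∀ u ∈ A j, ∀ w ∈ A j, ¬ G.Adj u w) ∧
      -- the A_j are linearly independent over 𝔽₂
      (∀ S : Finset (Fin (Fintype.card V)), S.Nonempty →
        ∃ v : V, (∑ j ∈ S, if v ∈ A j then (1 : ZMod 2) else 0) ≠ 0) ∧
      -- every sign sequence is nontrivial at T
      (∀ j, signSeq G (A j) T = 1 ∨ signSeq G (A j) T = -1) ∧
      -- positive weights, balanced at T
      (∀ j, 0 < m j) ∧ 0 < W ∧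
      (∑ j ∈ Finset.univ.filter
          (fun j => signSeq G (A j) T = 1), m j) = W ∧
      (∑ j ∈ Finset.univ.filter
          (fun j => signSeq G (A j) T = -1), m j) = W ∧
      -- (i) the classical maximum equals β_C = 2W
      (∀ a b : V → ℤ, (∀ i, a i = 1 ∨ a i = -1) → (∀ i, b i = 1 ∨ b i = -1) →
        (∑ j : Fin (Fintype.card V), (m j : ℤ) *
          ((a T + signSeq G (A j) T * b T) *
            ∏ i ∈ Finset.univ.erase T, clObsV a b i (signSeq G (A j) i)))
          ≤ 2 * W) ∧
      (∃ a b : V → ℤ, (∀ i, a i = 1 ∨ a i = -1) ∧ (∀ i, b i = 1 ∨ b i = -1) ∧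
        (∑ j : Fin (Fintype.card V), (m j : ℤ) *
          ((a T + signSeq G (A j) T * b T) *
            ∏ i ∈ Finset.univ.erase T, clObsV a b i (signSeq G (A j) i)))
          = 2 * W) ∧
      -- (ii) the graph state with the ideal observables reaches √2 · β_C
      ⟪graphState G,
        (∑ j : Fin (Fintype.card V), m j •
          ((idealA {T} T + signSeq G (A j) T • idealB {T} T) *
            ((Finset.univ.erase T).toList.map
              (fun i => obsV (idealA {T}) (idealB {T}) i
                (signSeq G (A j) i))).prod))
          (graphState G)⟫_ℂ
        = ((Real.sqrt 2 * (2 * W) : ℝ) : ℂ) := by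
  obtain ⟨T, w, hTw⟩ := hedge
  set e := (Fintype.equivFin V).symm
  set A : Fin (Fintype.card V) → Finset V := fun j => anchoredSet G T (e j)
  have hind : ∀ j, ∀ u ∈ A j, ∀ w ∈ A j, ¬ G.Adj u w := fun j =>
    anchoredSet_independent G T (e j)
  have hsign : ∀ j, signSeq G (A j) T = 1 ∨ signSeq G (A j) T = -1 := fun j => by
    rw [signSeq_anchoredSet]; split_ifs <;> simp
  obtain ⟨m, W, hm, hW, hP, hM⟩ := exists_balanced_weights (fun j => signSeq G (A j) T)
    ⟨e.symm T, by simp [A, signSeq_anchoredSet]⟩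
    ⟨e.symm w, by simp [A, signSeq_anchoredSet, hTw]⟩
  refine ⟨A, T, m, W, hind, fun S hS => exists_sum_ite_mem_ne_zero e.injective
    (fun j => mem_anchoredSet_self G T (e j)) (fun j => anchoredSet_subset G T (e j)) hS,
    hsign, hm, hW, hP, hM, ?_, ?_, ?_⟩
  · intro a b ha hb
    exact bell_sum_le hsign hP hM (fun j => prod_clObsV_eq_one_or ha hb _ _) (ha T) (hb T)
  · refine ⟨fun _ => 1, fun _ => 1, fun _ => Or.inl rfl, fun _ => Or.inl rfl, ?_⟩
    simpa [clObsV] using bell_sum_eq_of_one hsign hP hM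
  · refine (inner_sum_nsmul_apply_of_eigen Finset.univ m
      (fun j => idealCorrelator T (signSeq G (A j))) (norm_graphState G)
      fun j _ => idealCorrelator_apply_graphState G (hind j) (hsign j)).trans ?_
    rw [← Nat.cast_sum, sum_balanced_weights hsign hP hM]
    push_cast
    ring

end
end

section
/- In the commuting-observable quantum setting, let s¹, s² be sign sequences pairable at index T, let B = Σ_{j=1,2} (A_T + s^j_T B_T) · ∏_{i≠T} O_i(s^j_i), and suppose a unit vector ψ saturates the quantum bound: ⟨ψ, B ψ⟩ = 2√2. Then both saturation relations hold: (1/√2)(A_T + s¹_T B_T) · ∏_{i≠T} O_i(s¹_i) ψ = ψ and (1/√2)(A_T + s²_T B_T) · ∏_{i≠T} O_i(s²_i) ψ = ψ. -/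
/-!
Write the two summands of the Bell operator as `P_j = (A_T + s^j_T B_T) Q_j` with
`Q_j = ∏_{i≠T} O_i(s^j_i)`. Each `Q_j` is a product of pairwise commuting self-adjoint involutions,
hence itself one, and it commutes with `A_T` and `B_T`; so `P_j` is self-adjoint and
`P_j² = (A_T + s^j_T B_T)²`. As `{s¹_T, s²_T} = {1, -1}`,
`P₁² + P₂² = (A_T + B_T)² + (A_T - B_T)² = 2 A_T² + 2 B_T² = 4`, and for a unit vector `ψ`
`‖P₁ψ - √2 ψ‖² + ‖P₂ψ - √2 ψ‖² = ⟪ψ, (P₁² + P₂²) ψ⟫ - 2√2 Re ⟪ψ, (P₁ + P₂) ψ⟫ + 4 = 4 - 8 + 4 = 0`.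
-/

open scoped InnerProductSpace

noncomputable section

variable {N : ℕ} {H : Type} [NormedAddCommGroup H] [InnerProductSpace ℂ H]

/-- The observable associated to the symbol `k`: `O_i(0) = I`, `O_i(+1) = A_i`,
`O_i(-1) = B_i`. -/
def obs (A B : Fin N → H →ₗ[ℂ] H) (i : Fin N) (k : ℤ) : H →ₗ[ℂ] H :=
  if k = 1 then A i else if k = -1 then B i else 1

/-- Product of commuting operators over all parties `i ≠ T`. -/
def prodExcept (T : Fin N) (f : Fin N → (H →ₗ[ℂ] H)) : H →ₗ[ℂ] H :=
  (((List.finRange N).filter (fun i => i ≠ T)).map f).prod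

/-- The pair Bell operator built from two pairable sign sequences. -/
def pairBell (A B : Fin N → H →ₗ[ℂ] H) (s1 s2 : Fin N → ℤ) (T : Fin N) :
    H →ₗ[ℂ] H :=
  (A T + s1 T • B T) * prodExcept T (fun i => obs A B i (s1 i))
    + (A T + s2 T • B T) * prodExcept T (fun i => obs A B i (s2 i))

theorem List.prod_induction_of_pairwise_commute {M : Type*} [Monoid M] (p : M → Prop)
    (hmul : ∀ a b, Commute a b → p a → p b → p (a * b)) (hone : p 1) :
    ∀ l : List M, l.Pairwise Commute → (∀ x ∈ l, p x) → p l.prod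
  | [], _, _ => by simpa using hone
  | x :: l, hc, hp => by
    obtain ⟨hx, hl⟩ := List.pairwise_cons.mp hc
    rw [List.prod_cons]
    exact hmul _ _ (Commute.list_prod_right l x hx) (hp x List.mem_cons_self)
      (prod_induction_of_pairwise_commute p hmul hone l hl fun y hy => hp y (.tail x hy))

theorem Commute.mul_mul_self_eq_one {M : Type*} [Monoid M] {a b : M} (hab : Commute a b)
    (ha : a * a = 1) (hb : b * b = 1) : a * b * (a * b) = 1 := by
  rw [hab.symm.mul_mul_mul_comm, ha, hb, one_mul]

theorem Commute.mul_mul_self_of_mul_self_eq_one {M : Type*} [Monoid M] {a b : M}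
    (hab : Commute a b) (hb : b * b = 1) : a * b * (a * b) = a * a := by
  rw [hab.symm.mul_mul_mul_comm, hb, mul_one]

theorem add_zsmul_mul_self_add_add_zsmul_mul_self {R : Type*} [Ring R] {a b : R} {u v : ℤ}
    (ha : a * a = 1) (hb : b * b = 1) (huv : u * v = -1) :
    (a + u • b) * (a + u • b) + (a + v • b) * (a + v • b) = 4 := by
  have h : (a + b) * (a + b) + (a + -b) * (a + -b) = 2 * (a * a) + 2 * (b * b) := by noncomm_ring
  rcases Int.mul_eq_neg_one_iff_eq_one_or_neg_one.mp huv with ⟨rfl, rfl⟩ | ⟨rfl, rfl⟩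
  · rw [one_zsmul, neg_one_zsmul, h, ha, hb]; norm_num
  · rw [one_zsmul, neg_one_zsmul, add_comm, h, ha, hb]; norm_num

section IsSymmetric

variable {𝕜 E : Type*} [RCLike 𝕜] [NormedAddCommGroup E] [InnerProductSpace 𝕜 E]

theorem LinearMap.IsSymmetric.zsmul {T : E →ₗ[𝕜] E} (hT : T.IsSymmetric) (n : ℤ) :
    (n • T).IsSymmetric := by
  rw [← Int.cast_smul_eq_zsmul 𝕜]
  exact hT.smul (map_intCast (starRingEnd 𝕜) n)

theorem LinearMap.IsSymmetric.norm_apply_sub_smul_sq {P : E →ₗ[𝕜] E} (hP : P.IsSymmetric)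
    (x : E) (c : ℝ) :
    ‖P x - (c : 𝕜) • x‖ ^ 2
      = RCLike.re ⟪x, (P * P) x⟫_𝕜 - 2 * c * RCLike.re ⟪x, P x⟫_𝕜 + c ^ 2 * ‖x‖ ^ 2 := by
  rw [@norm_sub_sq 𝕜, ← inner_self_eq_norm_sq (𝕜 := 𝕜), hP, norm_smul, inner_smul_right, hP]
  simp only [Module.End.mul_apply, RCLike.re_ofReal_mul, RCLike.norm_ofReal, mul_pow, sq_abs]
  ring


theorem apply_eq_sqrt_two_smul_of_inner_add_eq {P₁ P₂ : E →ₗ[𝕜] E} (h₁ : P₁.IsSymmetric)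
    (h₂ : P₂.IsSymmetric) (hsq : P₁ * P₁ + P₂ * P₂ = 4) {ψ : E} (hψ : ‖ψ‖ = 1)
    (hsat : ⟪ψ, (P₁ + P₂) ψ⟫_𝕜 = ((2 * √2 : ℝ) : 𝕜)) :
    P₁ ψ = ((√2 : ℝ) : 𝕜) • ψ ∧ P₂ ψ = ((√2 : ℝ) : 𝕜) • ψ := by
  have hsq_re : RCLike.re ⟪ψ, (P₁ * P₁) ψ⟫_𝕜 + RCLike.re ⟪ψ, (P₂ * P₂) ψ⟫_𝕜 = 4 := by
    rw [← map_add, ← inner_add_right, ← LinearMap.add_apply, hsq, Module.End.ofNat_apply,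
      ← Nat.cast_smul_eq_nsmul 𝕜, inner_smul_right, inner_self_eq_norm_sq_to_K, hψ]
    norm_num
  have hsat_re : RCLike.re ⟪ψ, P₁ ψ⟫_𝕜 + RCLike.re ⟪ψ, P₂ ψ⟫_𝕜 = 2 * √2 := by
    rw [← map_add, ← inner_add_right, ← LinearMap.add_apply, hsat, RCLike.ofReal_re]
  have hsum : ‖P₁ ψ - ((√2 : ℝ) : 𝕜) • ψ‖ ^ 2 + ‖P₂ ψ - ((√2 : ℝ) : 𝕜) • ψ‖ ^ 2 = 0 := by
    rw [h₁.norm_apply_sub_smul_sq, h₂.norm_apply_sub_smul_sq, hψ]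
    linear_combination hsq_re - 2 * √2 * hsat_re - 2 * Real.sq_sqrt zero_le_two
  obtain ⟨hz₁, hz₂⟩ := (add_eq_zero_iff_of_nonneg (sq_nonneg _) (sq_nonneg _)).mp hsum
  rw [sq_eq_zero_iff, norm_eq_zero, sub_eq_zero] at hz₁ hz₂
  exact ⟨hz₁, hz₂⟩

end IsSymmetric

theorem prodExcept_induction (p : (H →ₗ[ℂ] H) → Prop)
    (hmul : ∀ a b, Commute a b → p a → p b → p (a * b)) (hone : p 1) {T : Fin N}
    {f : Fin N → H →ₗ[ℂ] H} (hcomm : ∀ i j, i ≠ j → Commute (f i) (f j)) (hf : ∀ i, p (f i)) :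
    p (prodExcept T f) := by
  refine List.prod_induction_of_pairwise_commute p hmul hone _ ?_ ?_
  · exact List.Pairwise.map _ hcomm ((List.nodup_finRange N).filter _)
  · simp only [List.mem_map]
    rintro _ ⟨i, -, rfl⟩
    exact hf i

theorem commute_prodExcept {X : H →ₗ[ℂ] H} {T : Fin N} {f : Fin N → H →ₗ[ℂ] H}
    (h : ∀ i, i ≠ T → Commute X (f i)) : Commute X (prodExcept T f) :=
  Commute.list_prod_right _ _ fun y hy => by
    obtain ⟨i, hi, rfl⟩ := List.mem_map.mp hy
    exact h i (of_decide_eq_true (List.mem_filter.mp hi).2)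

def bellTerm (A B : Fin N → H →ₗ[ℂ] H) (s : Fin N → ℤ) (T : Fin N) : H →ₗ[ℂ] H :=
  (A T + s T • B T) * prodExcept T fun i => obs A B i (s i)

section Observables

variable {A B : Fin N → H →ₗ[ℂ] H}

theorem obs_cases (p : (H →ₗ[ℂ] H) → Prop) {i : Fin N} (hA : p (A i)) (hB : p (B i))
    (hone : p 1) (k : ℤ) : p (obs A B i k) := by
  unfold obs
  split_ifs <;> assumption

theorem Commute.obs_right {X : H →ₗ[ℂ] H} {i : Fin N} (hA : Commute X (A i))
    (hB : Commute X (B i)) (k : ℤ) : Commute X (obs A B i k) :=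
  obs_cases (Commute X) hA hB (.one_right X) k

theorem commute_obs (hAA : ∀ i j, i ≠ j → Commute (A i) (A j))
    (hBB : ∀ i j, i ≠ j → Commute (B i) (B j)) (hAB : ∀ i j, i ≠ j → Commute (A i) (B j))
    {i j : Fin N} (hij : i ≠ j) (k m : ℤ) : Commute (obs A B i k) (obs A B j m) :=
  (Commute.obs_right (hAA j i hij.symm) (hAB j i hij.symm) k).symm.obs_right
    (Commute.obs_right (hAB i j hij).symm (hBB j i hij.symm) k).symm m

theorem isSymmetric_prodExcept_obs (hA : ∀ i, (A i).IsSymmetric) (hB : ∀ i, (B i).IsSymmetric)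
    (hAA : ∀ i j, i ≠ j → Commute (A i) (A j))
    (hBB : ∀ i j, i ≠ j → Commute (B i) (B j)) (hAB : ∀ i j, i ≠ j → Commute (A i) (B j))
    (T : Fin N) (s : Fin N → ℤ) : (prodExcept T fun i => obs A B i (s i)).IsSymmetric :=
  prodExcept_induction _ (fun _ _ hab ha hb => ha.mul_of_commute hb hab)
    LinearMap.IsSymmetric.one
    (fun _ _ hij => commute_obs hAA hBB hAB hij _ _)
    fun i => obs_cases (fun X : H →ₗ[ℂ] H => X.IsSymmetric) (hA i) (hB i)
      LinearMap.IsSymmetric.one (s i)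

theorem prodExcept_obs_mul_self (hA2 : ∀ i, A i * A i = 1) (hB2 : ∀ i, B i * B i = 1)
    (hAA : ∀ i j, i ≠ j → Commute (A i) (A j))
    (hBB : ∀ i j, i ≠ j → Commute (B i) (B j)) (hAB : ∀ i j, i ≠ j → Commute (A i) (B j))
    (T : Fin N) (s : Fin N → ℤ) :
    (prodExcept T fun i => obs A B i (s i)) * (prodExcept T fun i => obs A B i (s i)) = 1 :=
  prodExcept_induction (fun X => X * X = 1) (fun _ _ hab ha hb => hab.mul_mul_self_eq_one ha hb)
    (mul_one 1) (fun _ _ hij => commute_obs hAA hBB hAB hij _ _)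
    fun i => obs_cases (fun X => X * X = 1) (hA2 i) (hB2 i) (mul_one 1) (s i)

theorem commute_add_zsmul_prodExcept_obs (hAA : ∀ i j, i ≠ j → Commute (A i) (A j))
    (hBB : ∀ i j, i ≠ j → Commute (B i) (B j)) (hAB : ∀ i j, i ≠ j → Commute (A i) (B j))
    (T : Fin N) (n : ℤ) (s : Fin N → ℤ) :
    Commute (A T + n • B T) (prodExcept T fun i => obs A B i (s i)) :=
  (commute_prodExcept fun i hi => Commute.obs_right (hAA T i hi.symm) (hAB T i hi.symm) _).add_left
    ((commute_prodExcept fun i hi =>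
      Commute.obs_right (hAB i T hi).symm (hBB T i hi.symm) _).smul_left n)

theorem isSymmetric_bellTerm (hA : ∀ i, (A i).IsSymmetric) (hB : ∀ i, (B i).IsSymmetric)
    (hAA : ∀ i j, i ≠ j → Commute (A i) (A j))
    (hBB : ∀ i j, i ≠ j → Commute (B i) (B j)) (hAB : ∀ i j, i ≠ j → Commute (A i) (B j))
    (s : Fin N → ℤ) (T : Fin N) : (bellTerm A B s T).IsSymmetric :=
  ((hA T).add ((hB T).zsmul _)).mul_of_commute (isSymmetric_prodExcept_obs hA hB hAA hBB hAB T s)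
    (commute_add_zsmul_prodExcept_obs hAA hBB hAB T _ s)

theorem bellTerm_mul_self (hA2 : ∀ i, A i * A i = 1) (hB2 : ∀ i, B i * B i = 1)
    (hAA : ∀ i j, i ≠ j → Commute (A i) (A j))
    (hBB : ∀ i j, i ≠ j → Commute (B i) (B j)) (hAB : ∀ i j, i ≠ j → Commute (A i) (B j))
    (s : Fin N → ℤ) (T : Fin N) :
    bellTerm A B s T * bellTerm A B s T = (A T + s T • B T) * (A T + s T • B T) :=
  (commute_add_zsmul_prodExcept_obs hAA hBB hAB T _ s).mul_mul_self_of_mul_self_eq_one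
    (prodExcept_obs_mul_self hA2 hB2 hAA hBB hAB T s)

end Observables

theorem pair_bell_saturation_general
    (A B : Fin N → H →ₗ[ℂ] H)
    (hAsa : ∀ i, (A i).IsSymmetric) (hBsa : ∀ i, (B i).IsSymmetric)
    (hA2 : ∀ i, A i * A i = 1) (hB2 : ∀ i, B i * B i = 1)
    (hAA : ∀ i j, i ≠ j → Commute (A i) (A j))
    (hBB : ∀ i j, i ≠ j → Commute (B i) (B j))
    (hAB : ∀ i j, i ≠ j → Commute (A i) (B j))
    (s1 s2 : Fin N → ℤ)
    (T : Fin N) (hpair : s1 T * s2 T = -1)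
    (ψ : H) (hψ : ‖ψ‖ = 1)
    (hsat : ⟪ψ, (pairBell A B s1 s2 T) ψ⟫_ℂ = ((2 * Real.sqrt 2 : ℝ) : ℂ)) :
    (((Real.sqrt 2 : ℝ) : ℂ)⁻¹ •
        ((A T + s1 T • B T) * prodExcept T (fun i => obs A B i (s1 i)))) ψ = ψ ∧
    (((Real.sqrt 2 : ℝ) : ℂ)⁻¹ •
        ((A T + s2 T • B T) * prodExcept T (fun i => obs A B i (s2 i)))) ψ = ψ := by
  have hsq : bellTerm A B s1 T * bellTerm A B s1 T + bellTerm A B s2 T * bellTerm A B s2 T = 4 := by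
    rw [bellTerm_mul_self hA2 hB2 hAA hBB hAB, bellTerm_mul_self hA2 hB2 hAA hBB hAB]
    exact add_zsmul_mul_self_add_add_zsmul_mul_self (hA2 T) (hB2 T) hpair
  obtain ⟨h1, h2⟩ := apply_eq_sqrt_two_smul_of_inner_add_eq
    (isSymmetric_bellTerm hAsa hBsa hAA hBB hAB s1 T)
    (isSymmetric_bellTerm hAsa hBsa hAA hBB hAB s2 T) hsq hψ hsat
  have hsqrt2 : ((√2 : ℝ) : ℂ) ≠ 0 := by exact_mod_cast Real.sqrt_ne_zero'.mpr two_pos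
  simp only [LinearMap.smul_apply, inv_smul_eq_iff₀ hsqrt2]
  exact ⟨h1, h2⟩

theorem pair_bell_saturation [FiniteDimensional ℂ H]
    (A B : Fin N → H →ₗ[ℂ] H)
    (hAsa : ∀ i, (A i).IsSymmetric) (hBsa : ∀ i, (B i).IsSymmetric)
    (hA2 : ∀ i, A i * A i = 1) (hB2 : ∀ i, B i * B i = 1)
    (hAA : ∀ i j, i ≠ j → Commute (A i) (A j))
    (hBB : ∀ i j, i ≠ j → Commute (B i) (B j))
    (hAB : ∀ i j, i ≠ j → Commute (A i) (B j))
    (s1 s2 : Fin N → ℤ)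
    (hs1 : ∀ i, s1 i = -1 ∨ s1 i = 0 ∨ s1 i = 1)
    (hs2 : ∀ i, s2 i = -1 ∨ s2 i = 0 ∨ s2 i = 1)
    (T : Fin N) (hpair : s1 T * s2 T = -1)
    (ψ : H) (hψ : ‖ψ‖ = 1)
    (hsat : ⟪ψ, (pairBell A B s1 s2 T) ψ⟫_ℂ = ((2 * Real.sqrt 2 : ℝ) : ℂ)) :
    (((Real.sqrt 2 : ℝ) : ℂ)⁻¹ •
        ((A T + s1 T • B T) * prodExcept T (fun i => obs A B i (s1 i)))) ψ = ψ ∧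
    (((Real.sqrt 2 : ℝ) : ℂ)⁻¹ •
        ((A T + s2 T • B T) * prodExcept T (fun i => obs A B i (s2 i)))) ψ = ψ :=
  pair_bell_saturation_general A B hAsa hBsa hA2 hB2 hAA hBB hAB s1 s2 T hpair ψ hψ hsat

end
end
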